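/- arXiv:1809.01748 — 2 statements merged into one kernel-verified Lean document; each statement's English description precedes it below -/
import Mathlib

section
/- Let H : ℝ^d → ℝ be convex and equal to the biconjugate of its Legendre transform H*, and let u₀ : ℝ^d → ℝ with Legendre transform u₀*. Then for every x ∈ ℝ^d and t > 0, sup_{p ∈ ℝ^d} [⟨p, x⟩ + t·H(p) − u₀*(p)] = sup_{q ∈ ℝ^d} [u₀**(x + t q) − t·H*(q)], where the suprema are taken in the extended reals. -/
/-!
Writing `H(p) = sup_q (⟨p, q⟩ - H*(q))` turns the left side into the double supremum of
`⟨p, x + t q⟩ - t H*(q) - u₀*(p)` over `(p, q)`; taking the supremum over `p` first instead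
produces `u₀**(x + t q) - t H*(q)`. In `EReal` the required distributivity of `+ c`, `- c` and
`t * ·` (for `t > 0`) over nonempty suprema holds for every `c`, infinite values included.
-/

open scoped RealInnerProductSpace

namespace EReal

variable {ι : Sort*}

lemma iSup_add [Nonempty ι] (f : ι → EReal) (a : EReal) : (⨆ i, f i) + a = ⨆ i, f i + a := by
  refine le_antisymm ?_ (iSup_le fun i => add_le_add_left (le_iSup f i) a)
  induction a with
  | bot => simp
  | top =>
    rcases eq_or_ne (⨆ i, f i) ⊥ with hbot | hne
    · simp [hbot]
    · obtain ⟨i, hi⟩ : ∃ i, f i ≠ ⊥ := by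
        by_contra! h
        exact hne (iSup_eq_bot.2 h)
      calc (⨆ i, f i) + ⊤ ≤ f i + ⊤ := by rw [add_top_of_ne_bot hi]; exact le_top
        _ ≤ ⨆ i, f i + ⊤ := le_iSup (fun i => f i + ⊤) i
  | coe a =>
    have hbot : ∀ y : EReal, (a : EReal) ≠ ⊥ ∨ y ≠ ⊥ := fun _ => Or.inl (coe_ne_bot a)
    have htop : ∀ y : EReal, (a : EReal) ≠ ⊤ ∨ y ≠ ⊤ := fun _ => Or.inl (coe_ne_top a)
    rw [← le_sub_iff_add_le (hbot _) (htop _)]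
    exact iSup_le fun i => (le_sub_iff_add_le (hbot _) (htop _)).2 (le_iSup (fun i => f i + a) i)

lemma iSup_sub [Nonempty ι] (f : ι → EReal) (a : EReal) : (⨆ i, f i) - a = ⨆ i, f i - a := by
  simp only [sub_eq_add_neg]
  exact iSup_add f (-a)

lemma coe_mul_iSup_of_pos {t : ℝ} (ht : 0 < t) (f : ι → EReal) :
    (t : EReal) * ⨆ i, f i = ⨆ i, t * f i := by
  have ht' : (0 : EReal) < t := by exact_mod_cast ht
  refine le_antisymm ?_ (iSup_le fun i => mul_le_mul_of_nonneg_left (le_iSup f i) ht'.le)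
  rw [mul_comm, ← le_div_iff_mul_le ht' (coe_ne_top t)]
  refine iSup_le fun i => ?_
  rw [le_div_iff_mul_le ht' (coe_ne_top t), mul_comm]
  exact le_iSup (fun i => (t : EReal) * f i) i

lemma coe_mul_sub_add_coe {t : ℝ} (ht : 0 < t) (r a : ℝ) (c : EReal) :
    (t : EReal) * (r - c) + a = ((a + t * r : ℝ) : EReal) - t * c := by
  induction c with
  | bot =>
    have h : ((a + t * r : ℝ) : EReal) - ⊥ = ⊤ := sub_bot (coe_ne_bot _)
    push_cast at h
    simp [sub_bot, coe_mul_top_of_pos ht, coe_mul_bot_of_pos ht, h]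
  | top => simp [sub_top, coe_mul_bot_of_pos ht, coe_mul_top_of_pos ht]
  | coe c =>
    norm_cast
    ring

end EReal

theorem stmt2_general {d : ℕ} (H : EuclideanSpace ℝ (Fin d) → ℝ)
    (Hstar : EuclideanSpace ℝ (Fin d) → EReal)
    (hbi : ∀ p, (H p : EReal) = ⨆ q, (((inner ℝ p q : ℝ) : EReal) - Hstar q))
    (u₀star : EuclideanSpace ℝ (Fin d) → EReal)
    (u₀bi : EuclideanSpace ℝ (Fin d) → EReal)
    (hu₀bi : ∀ x, u₀bi x = ⨆ q, (((inner ℝ x q : ℝ) : EReal) - u₀star q))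
    (x : EuclideanSpace ℝ (Fin d)) (t : ℝ) (ht : 0 < t) :
    (⨆ p, (((inner ℝ p x : ℝ) + t * H p : EReal) - u₀star p)) =
      ⨆ q, (u₀bi (x + t • q) - (t : EReal) * Hstar q) := by
  calc (⨆ p, (((inner ℝ p x : ℝ) + t * H p : EReal) - u₀star p))
      = ⨆ p, ⨆ q, ((((inner ℝ p x : ℝ) + t * (inner ℝ p q : ℝ) : ℝ) : EReal)
          - t * Hstar q - u₀star p) := by
        refine iSup_congr fun p => ?_
        rw [hbi p, EReal.coe_mul_iSup_of_pos ht, add_comm, EReal.iSup_add, EReal.iSup_sub]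
        simp only [EReal.coe_mul_sub_add_coe ht]
    _ = ⨆ q, ⨆ p, ((((inner ℝ p x : ℝ) + t * (inner ℝ p q : ℝ) : ℝ) : EReal)
          - t * Hstar q - u₀star p) := iSup_comm
    _ = ⨆ q, (u₀bi (x + t • q) - (t : EReal) * Hstar q) := by
        refine iSup_congr fun q => ?_
        rw [hu₀bi, EReal.iSup_sub]
        refine iSup_congr fun p => ?_
        rw [inner_add_left, real_inner_smul_left, real_inner_comm x, real_inner_comm q]
        simp only [sub_eq_add_neg, add_right_comm]

/-- Hopf–Lax-Oleinik equivalence: if `H` is convex and equals the biconjugate of its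
Legendre transform `H*`, then for every `x` and `t > 0`,
`sup_p [⟨p,x⟩ + t H(p) - u₀*(p)] = sup_q [u₀**(x + t q) - t H*(q)]` in the extended
reals. -/
theorem stmt2 {d : ℕ} (H : EuclideanSpace ℝ (Fin d) → ℝ)
    (hH : ConvexOn ℝ Set.univ H)
    (Hstar : EuclideanSpace ℝ (Fin d) → EReal)
    (hHstar : ∀ q, Hstar q = ⨆ p, (((inner ℝ q p : ℝ) - H p : ℝ) : EReal))
    (hbi : ∀ p, (H p : EReal) = ⨆ q, (((inner ℝ p q : ℝ) : EReal) - Hstar q))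
    (u₀ : EuclideanSpace ℝ (Fin d) → ℝ)
    (u₀star : EuclideanSpace ℝ (Fin d) → EReal)
    (hu₀star : ∀ q, u₀star q = ⨆ p, (((inner ℝ q p : ℝ) - u₀ p : ℝ) : EReal))
    (u₀bi : EuclideanSpace ℝ (Fin d) → EReal)
    (hu₀bi : ∀ x, u₀bi x = ⨆ q, (((inner ℝ x q : ℝ) : EReal) - u₀star q))
    (x : EuclideanSpace ℝ (Fin d)) (t : ℝ) (ht : 0 < t) :
    (⨆ p, (((inner ℝ p x : ℝ) + t * H p : EReal) - u₀star p)) =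
      ⨆ q, (u₀bi (x + t • q) - (t : EReal) * Hstar q) :=
  stmt2_general H Hstar hbi u₀star u₀bi hu₀bi x t ht
end

section
/- For all real numbers p, q, s, the identity (|p| − |q|)·s = max_{a ∈ [−1,1]} min_{b ∈ [−1,1]} [ (a·s₊ + b·s₋)·p + (b·s₊ + a·s₋)·q ] holds, where s₊ = max(s,0) and s₋ = max(−s,0). -/
lemma affine_bound (c k b : ℝ) (hb : b ∈ Set.Icc (-1:ℝ) 1) :
    c - |k| ≤ c + k * b ∧ c + k * b ≤ c + |k| := by
  have h1 : |k * b| ≤ |k| := by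
    rw [abs_mul]
    have hb' : |b| ≤ 1 := abs_le.2 ⟨hb.1, hb.2⟩
    nlinarith [abs_nonneg k]
  have := abs_le.1 h1
  constructor <;> linarith [this.1, this.2]

lemma inf_affine (c k : ℝ) :
    sInf ((fun b => c + k * b) '' Set.Icc (-1 : ℝ) 1) = c - |k| := by
  apply le_antisymm
  · apply csInf_le
    · exact ⟨c - |k|, by rintro x ⟨b, hb, rfl⟩; exact (affine_bound c k b hb).1⟩
    · rcases le_total 0 k with h | h
      · exact ⟨-1, by norm_num, by rw [abs_of_nonneg h]; ring⟩
      · exact ⟨1, by norm_num, by rw [abs_of_nonpos h]; ring⟩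
  · apply le_csInf ((Set.nonempty_Icc.2 (by norm_num)).image _)
    rintro x ⟨b, hb, rfl⟩
    exact (affine_bound c k b hb).1

lemma sup_affine (c k : ℝ) :
    sSup ((fun b => c + k * b) '' Set.Icc (-1 : ℝ) 1) = c + |k| := by
  apply le_antisymm
  · apply csSup_le ((Set.nonempty_Icc.2 (by norm_num)).image _)
    rintro x ⟨b, hb, rfl⟩
    exact (affine_bound c k b hb).2
  · apply le_csSup
    · exact ⟨c + |k|, by rintro x ⟨b, hb, rfl⟩; exact (affine_bound c k b hb).2⟩
    · rcases le_total 0 k with h | h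
      · exact ⟨1, by norm_num, by rw [abs_of_nonneg h]; ring⟩
      · exact ⟨-1, by norm_num, by rw [abs_of_nonpos h]; ring⟩

/-- Isaacs (max–min) representation of the Hamiltonian `(|p| - |q|)·s`. -/
theorem stmt5 (p q s : ℝ) :
    (|p| - |q|) * s =
      sSup ((fun a => sInf ((fun b =>
          (a * max s 0 + b * max (-s) 0) * p + (b * max s 0 + a * max (-s) 0) * q) ''
            Set.Icc (-1 : ℝ) 1)) '' Set.Icc (-1 : ℝ) 1) := by
  set sp := max s 0
  set sm := max (-s) 0
  have hinner : ∀ a : ℝ,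
      (fun b => (a * sp + b * sm) * p + (b * sp + a * sm) * q)
        = fun b => (a * (sp * p + sm * q)) + (sm * p + sp * q) * b := by
    intro a; funext b; ring
  have h1 : (fun a => sInf ((fun b =>
      (a * sp + b * sm) * p + (b * sp + a * sm) * q) '' Set.Icc (-1 : ℝ) 1))
      = fun a => (-|sm * p + sp * q|) + (sp * p + sm * q) * a := by
    funext a
    rw [hinner a, inf_affine]
    ring
  rw [h1, sup_affine]
  rcases le_total 0 s with h | h
  · have hsp : sp = s := max_eq_left h
    have hsm : sm = 0 := max_eq_right (by linarith)
    rw [hsp, hsm]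
    simp [abs_mul, abs_of_nonneg h]
    ring
  · have hsp : sp = 0 := max_eq_right h
    have hsm : sm = -s := max_eq_left (by linarith)
    rw [hsp, hsm]
    simp [abs_mul, abs_of_nonpos h]
    ring
end
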